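/- Assume the pure peakon assumption. Then for every 1 ≤ k ≤ n, the function z ↦ (C_n(z)/A_n(z))·s_{11}(−z) − (1/2)·(B_n(z)/A_n(z))·s_{21}(−z) + s_{31}(−z) is O(1/z^k) as z → +∞ (big-O with respect to the filter at +∞ on the reals). -/

import Mathlib

open Matrix

/-- The 3×3 matrix `S(x,m;z) = I − z·m·v(x)·w(x)ᵀ` with
`v(x) = (e^{−x}, −2, e^{x})ᵀ` and `w(x) = (e^{x}, 1, e^{−x})ᵀ`. -/
noncomputable def Speak (x m z : ℝ) : Matrix (Fin 3) (Fin 3) ℝ :=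
  1 - (z * m) • vecMulVec ![Real.exp (-x), -2, Real.exp x] ![Real.exp x, 1, Real.exp (-x)]

/-- `S_{[n,k]}(z) = S_n(z) · S_{n−1}(z) ⋯ S_{n−k+1}(z)`, where `S_j(z) = S(x_j, m_j; z)`. -/
noncomputable def Sblock (x m : ℕ → ℝ) (n k : ℕ) (z : ℝ) : Matrix (Fin 3) (Fin 3) ℝ :=
  ((List.range k).map (fun i => Speak (x (n - i)) (m (n - i)) z)).prod

/-- The vector `(A_j(z), B_j(z), C_j(z))ᵀ = S_j(z) · S_{j−1}(z) ⋯ S_1(z) · (1,0,0)ᵀ`. -/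
noncomputable def ABCvec (x m : ℕ → ℝ) (j : ℕ) (z : ℝ) : Fin 3 → ℝ :=
  (((List.range j).map (fun i => Speak (x (j - i)) (m (j - i)) z)).prod).mulVec ![1, 0, 0]

/-!
Since `w(x) ⬝ v(x) = 0`, each `S(x,m;z)` is a rank-one perturbation of the identity with
inverse `S(x,m;-z)`, and since `J w(x) = v(x)` for `J = [[0,0,1],[0,-2,0],[1,0,0]]`, also
`J Sᵀ = S J`. With `P = S_n ⋯ S_1` and `Q = S_1 ⋯ S_n`, the numerator
`C s₁₁(-z) - B s₂₁(-z)/2 + A s₃₁(-z)` is the `(1,1)` entry of `Pᵀ J⁻¹ S_{[n,k]}(-z) =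
J⁻¹ Q S_{[n,k]}(-z) = J⁻¹ (S_1 ⋯ S_{n-k})(z)`, hence `O(z^{n-k})`. On the other hand `A_n(z)`
grows exactly like `z^n`: the leading coefficient of `(A_j, B_j, C_j)` is a multiple of `v(x_j)`
picking up the factor `-m_{j+1} w(x_{j+1}) ⬝ v(x_j) = -4 m_{j+1} sinh²((x_{j+1} - x_j)/2) ≠ 0`
at each step.
-/

open Filter Asymptotics Topology

namespace Matrix

variable {ι R : Type*} [Fintype ι] [DecidableEq ι] [CommRing R]

theorem one_sub_smul_vecMulVec_mul_one_add_smul_vecMulVec {v w : ι → R} (h : w ⬝ᵥ v = 0)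
    (c : R) : (1 - c • vecMulVec v w) * (1 + c • vecMulVec v w) = 1 := by
  rw [sub_mul, mul_add, mul_add, smul_mul_smul_comm, vecMulVec_mul_vecMulVec, h, zero_smul,
    vecMulVec_zero, smul_zero]
  simp

theorem mul_transpose_one_sub_smul_vecMulVec {J : Matrix ι ι R} (hJ : Jᵀ = J) {v w : ι → R}
    (hJw : J *ᵥ w = v) (c : R) :
    J * (1 - c • vecMulVec v w)ᵀ = (1 - c • vecMulVec v w) * J := by
  rw [transpose_sub, transpose_one, transpose_smul, transpose_vecMulVec, mul_sub, sub_mul,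
    Matrix.mul_smul, Matrix.smul_mul, mul_vecMulVec, vecMulVec_mul, ← mulVec_transpose, hJ, hJw]
  simp

end Matrix

section Peakon

open Real

noncomputable def peakonV (x : ℝ) : Fin 3 → ℝ := ![exp (-x), -2, exp x]

noncomputable def peakonW (x : ℝ) : Fin 3 → ℝ := ![exp x, 1, exp (-x)]

theorem Speak_eq (x m z : ℝ) :
    Speak x m z = 1 - (z * m) • vecMulVec (peakonV x) (peakonW x) := rfl

theorem peakonW_dotProduct_peakonV (x y : ℝ) :
    peakonW y ⬝ᵥ peakonV x = exp (y - x) - 2 + exp (x - y) := by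
  simp [peakonW, peakonV, dotProduct, Fin.sum_univ_three, sub_eq_add_neg, exp_add]
  ring

theorem peakonW_dotProduct_peakonV_pos {x y : ℝ} (h : x ≠ y) :
    0 < peakonW y ⬝ᵥ peakonV x := by
  rw [peakonW_dotProduct_peakonV]
  linarith [add_one_lt_exp (sub_ne_zero.2 h), add_one_lt_exp (sub_ne_zero.2 h.symm)]

theorem Speak_mul_Speak_neg (x m z : ℝ) : Speak x m z * Speak x m (-z) = 1 := by
  rw [Speak_eq, Speak_eq, neg_mul, neg_smul, sub_neg_eq_add]
  refine one_sub_smul_vecMulVec_mul_one_add_smul_vecMulVec ?_ _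
  norm_num [peakonW_dotProduct_peakonV]

theorem Speak_mulVec (x m z : ℝ) (u : Fin 3 → ℝ) :
    Speak x m z *ᵥ u = u - (z * m * (peakonW x ⬝ᵥ u)) • peakonV x := by
  rw [Speak_eq, sub_mulVec, one_mulVec, smul_mulVec, vecMulVec_mulVec, op_smul_eq_smul,
    smul_smul]

def peakonJ : Matrix (Fin 3) (Fin 3) ℝ := !![0, 0, 1; 0, -2, 0; 1, 0, 0]

noncomputable def peakonJinv : Matrix (Fin 3) (Fin 3) ℝ := !![0, 0, 1; 0, -(1 / 2), 0; 1, 0, 0]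

theorem peakonJ_mul_peakonJinv : peakonJ * peakonJinv = 1 := by
  rw [peakonJ, peakonJinv, mul_fin_three, one_fin_three]
  norm_num

theorem peakonJinv_mul_peakonJ : peakonJinv * peakonJ = 1 := by
  rw [peakonJ, peakonJinv, mul_fin_three, one_fin_three]
  norm_num

theorem peakonJ_mul_transpose_Speak (x m z : ℝ) :
    peakonJ * (Speak x m z)ᵀ = Speak x m z * peakonJ := by
  rw [Speak_eq]
  refine mul_transpose_one_sub_smul_vecMulVec ?_ ?_ _
  · ext i j
    fin_cases i <;> fin_cases j <;> rfl
  · ext i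
    simp only [peakonJ, peakonW, peakonV, mulVec, dotProduct, Fin.sum_univ_three]
    fin_cases i <;> simp

theorem isBigO_Speak_apply (x m : ℝ) (i l : Fin 3) :
    (fun z => Speak x m z i l) =O[atTop] fun z => z := by
  have h : (fun z => Speak x m z i l)
      = fun z => (1 : Matrix (Fin 3) (Fin 3) ℝ) i l - m * (peakonV x i * peakonW x l) * z := by
    funext z
    simp only [Speak_eq, Matrix.sub_apply, Matrix.smul_apply, vecMulVec_apply, smul_eq_mul]
    ring
  rw [h]
  exact (isLittleO_const_id_atTop _).isBigO.sub ((isBigO_refl _ _).const_mul_left _)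

end Peakon

noncomputable def SprodAsc (x m : ℕ → ℝ) (j : ℕ) (z : ℝ) : Matrix (Fin 3) (Fin 3) ℝ :=
  ((List.range j).map (fun i => Speak (x (i + 1)) (m (i + 1)) z)).prod

section Products

variable (x m : ℕ → ℝ)

theorem SprodAsc_succ (j : ℕ) (z : ℝ) :
    SprodAsc x m (j + 1) z = SprodAsc x m j z * Speak (x (j + 1)) (m (j + 1)) z := by
  simp [SprodAsc, List.range_succ]

theorem Sblock_succ (n k : ℕ) (z : ℝ) :
    Sblock x m n (k + 1) z = Sblock x m n k z * Speak (x (n - k)) (m (n - k)) z := by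
  simp [Sblock, List.range_succ]

theorem Sblock_self_succ (j : ℕ) (z : ℝ) :
    Sblock x m (j + 1) (j + 1) z = Speak (x (j + 1)) (m (j + 1)) z * Sblock x m j j z := by
  simp [Sblock, List.range_succ_eq_map, Function.comp_def]

theorem ABCvec_eq (j : ℕ) (z : ℝ) : ABCvec x m j z = Sblock x m j j z *ᵥ ![1, 0, 0] := rfl

theorem ABCvec_succ (j : ℕ) (z : ℝ) :
    ABCvec x m (j + 1) z = Speak (x (j + 1)) (m (j + 1)) z *ᵥ ABCvec x m j z := by
  rw [ABCvec_eq, ABCvec_eq, Sblock_self_succ, mulVec_mulVec]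

theorem peakonJ_mul_transpose_Sblock_self (j : ℕ) (z : ℝ) :
    peakonJ * (Sblock x m j j z)ᵀ = SprodAsc x m j z * peakonJ := by
  induction j with
  | zero => simp [Sblock, SprodAsc]
  | succ j ih =>
    rw [Sblock_self_succ, SprodAsc_succ, transpose_mul, ← Matrix.mul_assoc, ih,
      Matrix.mul_assoc, peakonJ_mul_transpose_Speak, Matrix.mul_assoc]

theorem transpose_Sblock_self_mul_peakonJinv (j : ℕ) (z : ℝ) :
    (Sblock x m j j z)ᵀ * peakonJinv = peakonJinv * SprodAsc x m j z := by
  calc (Sblock x m j j z)ᵀ * peakonJinv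
      = peakonJinv * (peakonJ * (Sblock x m j j z)ᵀ) * peakonJinv := by
        rw [← Matrix.mul_assoc, peakonJinv_mul_peakonJ, Matrix.one_mul]
    _ = peakonJinv * SprodAsc x m j z := by
        rw [peakonJ_mul_transpose_Sblock_self, Matrix.mul_assoc, Matrix.mul_assoc,
          peakonJ_mul_peakonJinv, Matrix.mul_one]

theorem SprodAsc_mul_Sblock_neg {n k : ℕ} (hk : k ≤ n) (z : ℝ) :
    SprodAsc x m n z * Sblock x m n k (-z) = SprodAsc x m (n - k) z := by
  induction k with
  | zero => simp [Sblock]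
  | succ k ih =>
    have hnk : n - k = n - (k + 1) + 1 := by omega
    rw [Sblock_succ, ← Matrix.mul_assoc, ih (by omega), hnk, SprodAsc_succ, Matrix.mul_assoc,
      Speak_mul_Speak_neg, Matrix.mul_one]

theorem weyl_numerator_eq {n k : ℕ} (hk : k ≤ n) (z : ℝ) :
    ABCvec x m n z 2 * Sblock x m n k (-z) 0 0
      - 1 / 2 * ABCvec x m n z 1 * Sblock x m n k (-z) 1 0
      + ABCvec x m n z 0 * Sblock x m n k (-z) 2 0
    = SprodAsc x m (n - k) z 2 0 := by
  have h : ((Sblock x m n n z)ᵀ * peakonJinv * Sblock x m n k (-z)) 0 0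
      = (peakonJinv * SprodAsc x m (n - k) z) 0 0 := by
    rw [transpose_Sblock_self_mul_peakonJinv, Matrix.mul_assoc, SprodAsc_mul_Sblock_neg x m hk]
  convert h using 1 <;>
    simp [mul_apply, Fin.sum_univ_three, peakonJinv, ABCvec_eq, mulVec, dotProduct]
  ring

end Products

theorem Matrix.isBigO_mul_apply {α ι κ μ 𝕜 : Type*} [Fintype κ] [NormedField 𝕜] {l : Filter α}
    {A : α → Matrix ι κ 𝕜} {B : α → Matrix κ μ 𝕜} {f g : α → 𝕜}
    (hA : ∀ i j, (fun z => A z i j) =O[l] f) (hB : ∀ i j, (fun z => B z i j) =O[l] g)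
    (i : ι) (j : μ) : (fun z => (A z * B z) i j) =O[l] (f * g) := by
  simp only [mul_apply]
  exact IsBigO.fun_sum fun t _ => (hA i t).mul (hB t j)

section Asymptotics

variable (x m : ℕ → ℝ)

theorem isBigO_SprodAsc_apply (j : ℕ) (i l : Fin 3) :
    (fun z => SprodAsc x m j z i l) =O[atTop] fun z => z ^ j := by
  induction j generalizing i l with
  | zero =>
    simpa [SprodAsc] using isBigO_const_one ℝ ((1 : Matrix (Fin 3) (Fin 3) ℝ) i l) atTop
  | succ j ih =>
    simp only [SprodAsc_succ, pow_succ]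
    exact isBigO_mul_apply ih (isBigO_Speak_apply _ _) i l

theorem tendsto_ABCvec_succ {j : ℕ} {u : Fin 3 → ℝ}
    (h : Tendsto (fun z => (z ^ j)⁻¹ • ABCvec x m j z) atTop (𝓝 u)) :
    Tendsto (fun z => (z ^ (j + 1))⁻¹ • ABCvec x m (j + 1) z) atTop
      (𝓝 (-(m (j + 1) * (peakonW (x (j + 1)) ⬝ᵥ u)) • peakonV (x (j + 1)))) := by
  have hdot : Tendsto (fun z => peakonW (x (j + 1)) ⬝ᵥ ((z ^ j)⁻¹ • ABCvec x m j z)) atTop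
      (𝓝 (peakonW (x (j + 1)) ⬝ᵥ u)) :=
    ((continuous_const.dotProduct continuous_id).tendsto u).comp h
  have hlim := (tendsto_inv_atTop_zero.smul h).sub ((hdot.const_mul (m (j + 1))).smul_const
    (peakonV (x (j + 1))))
  rw [zero_smul, zero_sub, ← neg_smul] at hlim
  refine hlim.congr' ?_
  filter_upwards [eventually_ne_atTop 0] with z hz
  simp only [ABCvec_succ, Speak_mulVec, dotProduct_smul, smul_sub, smul_smul, smul_eq_mul]
  congr 2 <;> field_simp <;> ring

end Asymptotics

section Nondegenerate

variable (x m : ℕ → ℝ) (n : ℕ)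

theorem exists_tendsto_ABCvec_div_pow (hm : ∀ i, 1 ≤ i → i ≤ n → m i ≠ 0)
    (hx : ∀ i, 1 ≤ i → i < n → x i ≠ x (i + 1)) {j : ℕ} (hj : 1 ≤ j) (hjn : j ≤ n) :
    ∃ c : ℝ, c ≠ 0 ∧
      Tendsto (fun z => (z ^ j)⁻¹ • ABCvec x m j z) atTop (𝓝 (c • peakonV (x j))) := by
  induction j, hj using Nat.le_induction with
  | base =>
    have h0 : Tendsto (fun z : ℝ => (z ^ 0)⁻¹ • ABCvec x m 0 z) atTop (𝓝 ![1, 0, 0]) := by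
      simp [ABCvec]
    refine ⟨-(m 1 * Real.exp (x 1)), ?_, ?_⟩
    · exact neg_ne_zero.2 (mul_ne_zero (hm 1 le_rfl hjn) (Real.exp_ne_zero _))
    · simpa [peakonW, dotProduct, Fin.sum_univ_three] using tendsto_ABCvec_succ x m h0
  | succ j hj ih =>
    obtain ⟨c, hc, hlim⟩ := ih (by omega)
    refine ⟨-(m (j + 1) * (c * (peakonW (x (j + 1)) ⬝ᵥ peakonV (x j)))), ?_, ?_⟩
    · exact neg_ne_zero.2 (mul_ne_zero (hm (j + 1) (by omega) hjn) (mul_ne_zero hc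
        (peakonW_dotProduct_peakonV_pos (hx j hj (by omega))).ne'))
    · simpa [dotProduct_smul] using tendsto_ABCvec_succ x m hlim

theorem isBigO_pow_ABCvec_zero (hm : ∀ i, 1 ≤ i → i ≤ n → m i ≠ 0)
    (hx : ∀ i, 1 ≤ i → i < n → x i ≠ x (i + 1)) :
    (fun z => z ^ n) =O[atTop] fun z => ABCvec x m n z 0 := by
  obtain ⟨a, ha, hlim⟩ : ∃ a ≠ 0,
      Tendsto (fun z => ABCvec x m n z 0 / z ^ n) atTop (𝓝 a) := by
    rcases Nat.eq_zero_or_pos n with rfl | hn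
    · exact ⟨1, one_ne_zero, by simp [ABCvec]⟩
    · obtain ⟨c, hc, hlim⟩ := exists_tendsto_ABCvec_div_pow x m n hm hx hn le_rfl
      refine ⟨c * Real.exp (-x n), mul_ne_zero hc (Real.exp_ne_zero _), ?_⟩
      simpa [div_eq_inv_mul, peakonV] using tendsto_pi_nhds.1 hlim 0
  exact isBigO_of_div_tendsto_nhds_of_ne_zero hlim ha

end Nondegenerate

theorem weyl_approx_combined_general (n : ℕ) (x m : ℕ → ℝ)
    (hm : ∀ i, 1 ≤ i → i ≤ n → 0 < m i)
    (hx : ∀ i, 1 ≤ i → i < n → x i < x (i + 1))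
    (k : ℕ) (hkn : k ≤ n) :
    (fun z : ℝ => (ABCvec x m n z 2 / ABCvec x m n z 0) * Sblock x m n k (-z) 0 0
        - (1 / 2) * (ABCvec x m n z 1 / ABCvec x m n z 0) * Sblock x m n k (-z) 1 0
        + Sblock x m n k (-z) 2 0)
      =O[Filter.atTop] (fun z : ℝ => 1 / z ^ k) := by
  have hA := isBigO_pow_ABCvec_zero x m n (fun i h₁ h₂ => (hm i h₁ h₂).ne')
    (fun i h₁ h₂ => (hx i h₁ h₂).ne)
  have hpos : ∀ᶠ z : ℝ in atTop, 0 < z := eventually_gt_atTop 0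
  have hA0 : ∀ᶠ z in atTop, ABCvec x m n z 0 ≠ 0 := by
    filter_upwards [hA.eq_zero_imp, hpos] with z hz hz0 h0
    exact pow_ne_zero n hz0.ne' (hz h0)
  have hinv := hA.inv_rev <| by
    filter_upwards [hpos] with z hz h using absurd h (pow_ne_zero n hz.ne')
  refine ((isBigO_SprodAsc_apply x m (n - k) 2 0).mul hinv).congr' ?_ ?_
  · filter_upwards [hA0] with z hz
    rw [← weyl_numerator_eq x m hkn z]
    field_simp
  · filter_upwards [hpos] with z hz
    rw [pow_sub₀ z hz.ne' hkn]
    field_simp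

theorem weyl_approx_combined (n : ℕ) (hn : 1 ≤ n) (x m : ℕ → ℝ)
    (hm : ∀ i, 1 ≤ i → i ≤ n → 0 < m i)
    (hx : ∀ i, 1 ≤ i → i < n → x i < x (i + 1))
    (k : ℕ) (hk1 : 1 ≤ k) (hkn : k ≤ n) :
    (fun z : ℝ => (ABCvec x m n z 2 / ABCvec x m n z 0) * Sblock x m n k (-z) 0 0
        - (1 / 2) * (ABCvec x m n z 1 / ABCvec x m n z 0) * Sblock x m n k (-z) 1 0
        + Sblock x m n k (-z) 2 0)
      =O[Filter.atTop] (fun z : ℝ => 1 / z ^ k) :=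
  weyl_approx_combined_general n x m hm hx k hkn
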